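/- arXiv:math/0306384 — 2 statements merged into one kernel-verified Lean document; each statement's English description precedes it below -/
import Mathlib

section
/- For a belief function arising from a bpa on a finite frame, Bel is 2-monotone (superadditive on unions): Bel(A ∪ B) ≥ Bel(A) + Bel(B) − Bel(A ∩ B) for all subsets A, B of Θ. -/
theorem bel_two_monotone {Θ : Type*} [Fintype Θ] [DecidableEq Θ] [Nonempty Θ]
    (m : Finset Θ → ℝ) (hnn : ∀ C, 0 ≤ m C) (h0 : m ∅ = 0)
    (htot : ∑ C : Finset Θ, m C = 1) (A B : Finset Θ) :
    ∑ C ∈ A.powerset, m C + ∑ C ∈ B.powerset, m C - ∑ C ∈ (A ∩ B).powerset, m C ≤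
      ∑ C ∈ (A ∪ B).powerset, m C := by
  have key : ∑ C ∈ A.powerset ∪ B.powerset, m C + ∑ C ∈ A.powerset ∩ B.powerset, m C
      = ∑ C ∈ A.powerset, m C + ∑ C ∈ B.powerset, m C :=
    Finset.sum_union_inter
  have hpi : A.powerset ∩ B.powerset = (A ∩ B).powerset := by
    ext C; simp only [Finset.mem_inter, Finset.mem_powerset, Finset.subset_inter_iff]
  rw [hpi] at key
  have hsub : A.powerset ∪ B.powerset ⊆ (A ∪ B).powerset := by
    intro C hC
    simp only [Finset.mem_union, Finset.mem_powerset] at hC ⊢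
    rcases hC with h | h
    · exact h.trans Finset.subset_union_left
    · exact h.trans Finset.subset_union_right
  have hle : ∑ C ∈ A.powerset ∪ B.powerset, m C ≤ ∑ C ∈ (A ∪ B).powerset, m C :=
    Finset.sum_le_sum_of_subset_of_nonneg hsub (fun i _ _ => hnn i)
  linarith
end

section
/- The pignistic probability lies between belief and plausibility: define P(θ) = Σ_{B ⊆ Θ, θ ∈ B} m(B)/|B| for each θ ∈ Θ, and P(A) = Σ_{θ ∈ A} P(θ). Then for every A ⊆ Θ, Bel(A) ≤ P(A) ≤ Pl(A). -/
/-!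
Exchanging the two sums gives `P(A) = ∑_B m(B) · |B ∩ A| / |B|`. The weight `|B ∩ A| / |B|`
lies in `[0, 1]`, equals `1` when `∅ ≠ B ⊆ A` and `0` when `B ∩ A = ∅`, so comparing the three
sums term by term gives both inequalities.
-/

open Finset

section Pignistic

variable {Θ : Type*} [DecidableEq Θ]

theorem sum_sum_filter_mem_eq_sum_card_inter_mul [Fintype Θ] (f : Finset Θ → ℝ) (A : Finset Θ) :
    ∑ θ ∈ A, ∑ B ∈ univ.filter (fun B : Finset Θ => θ ∈ B), f B
      = ∑ B : Finset Θ, ((B ∩ A).card : ℝ) * f B := by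
  simp_rw [sum_filter]
  rw [sum_comm]
  refine sum_congr rfl fun B _ => ?_
  rw [sum_ite_mem, inter_comm, sum_const, nsmul_eq_mul]

theorem ite_subset_le_card_inter_mul_div_card {A B : Finset Θ} {a : ℝ} (ha : 0 ≤ a)
    (h_empty : B = ∅ → a = 0) :
    (if B ⊆ A then a else 0) ≤ (B ∩ A).card * (a / B.card) := by
  split_ifs with hBA
  · rcases B.eq_empty_or_nonempty with rfl | hB
    · simp [h_empty rfl]
    · rw [inter_eq_left.mpr hBA, mul_div_cancel₀ a (by positivity)]
  · positivity

theorem card_inter_mul_div_card_le_ite {A B : Finset Θ} {a : ℝ} (ha : 0 ≤ a) :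
    (B ∩ A).card * (a / B.card) ≤ if B ∩ A ≠ ∅ then a else 0 := by
  split_ifs with hBA
  · rw [mul_div_left_comm]
    exact mul_le_of_le_one_right ha
      (div_le_one_of_le₀ (mod_cast card_le_card inter_subset_left) (by positivity))
  · simp [not_not.mp hBA]

end Pignistic

theorem pignistic_between_bel_pl_general {Θ : Type*} [Fintype Θ] [DecidableEq Θ]
    (m : Finset Θ → ℝ) (hnn : ∀ B, 0 ≤ m B) (h0 : m ∅ = 0)
    (P : Θ → ℝ)
    (hP : ∀ θ, P θ = ∑ B ∈ Finset.univ.filter (fun B : Finset Θ => θ ∈ B), m B / B.card)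
    (A : Finset Θ) :
    ∑ B ∈ A.powerset, m B ≤ ∑ θ ∈ A, P θ ∧
      ∑ θ ∈ A, P θ ≤ ∑ B ∈ Finset.univ.filter (fun B : Finset Θ => B ∩ A ≠ ∅), m B := by
  have hPA : ∑ θ ∈ A, P θ = ∑ B : Finset Θ, ((B ∩ A).card : ℝ) * (m B / B.card) := by
    simp_rw [hP]
    exact sum_sum_filter_mem_eq_sum_card_inter_mul _ A
  have hBel : A.powerset = univ.filter (· ⊆ A) := by
    ext B; simp
  rw [hPA, hBel, sum_filter, sum_filter]
  exact ⟨sum_le_sum fun B _ =>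
      ite_subset_le_card_inter_mul_div_card (hnn B) fun hB => hB ▸ h0,
    sum_le_sum fun B _ => card_inter_mul_div_card_le_ite (hnn B)⟩

theorem pignistic_between_bel_pl {Θ : Type*} [Fintype Θ] [DecidableEq Θ] [Nonempty Θ]
    (m : Finset Θ → ℝ) (hnn : ∀ B, 0 ≤ m B) (h0 : m ∅ = 0)
    (htot : ∑ B : Finset Θ, m B = 1)
    (P : Θ → ℝ)
    (hP : ∀ θ, P θ = ∑ B ∈ Finset.univ.filter (fun B : Finset Θ => θ ∈ B), m B / B.card)
    (A : Finset Θ) :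
    ∑ B ∈ A.powerset, m B ≤ ∑ θ ∈ A, P θ ∧
      ∑ θ ∈ A, P θ ≤ ∑ B ∈ Finset.univ.filter (fun B : Finset Θ => B ∩ A ≠ ∅), m B :=
  pignistic_between_bel_pl_general m hnn h0 P hP A
end
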